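/- Let ρ₁,…,ρ_N be density matrices on ℂ^D and α₁,…,α_N positive reals with ∑ᵢ αᵢ = 1. Then ∑_{i>j} αᵢαⱼ‖ρᵢ - ρⱼ‖₁² ≤ 8(1 - tr((∑ᵢ αᵢρᵢ)²)) ≤ 8(1 - 1/D). -/

import Mathlib

/-!
For density matrices `ρ, σ` let `P` be the spectral projection of `ρ - σ` onto its positive part.
As `tr (ρ - σ) = 0`, `‖ρ - σ‖₁ = 2 tr P(ρ - σ) = 2 (tr Pρ(1 - σ) - tr P(1 - ρ)σ)`, and the
Cauchy–Schwarz inequality for the Hilbert–Schmidt inner product, applied to `√ρ P √(1 - σ)` and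
`√ρ √(1 - σ)`, bounds the first term by `√(tr ρ(1 - σ)) = √(1 - tr ρσ)`; the second term is the
first one for `(σ, ρ)`, conjugated. Hence `‖ρ - σ‖₁² ≤ 16 (1 - tr ρσ)`.

Summing over the pairs `j < i` with weights `αᵢαⱼ` gives at most half of
`∑ᵢⱼ αᵢαⱼ (1 - tr ρᵢρⱼ) = 1 - tr ρ̄²`, where `ρ̄ = ∑ᵢ αᵢρᵢ`, and `1 = (tr ρ̄)² ≤ D tr ρ̄²` by Cauchy–Schwarz on the
eigenvalues of `ρ̄`.
-/

open Matrix ComplexOrder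

/-- The trace norm of a complex matrix: `tr √(AᴴA)`. -/
noncomputable def traceNorm {D : ℕ} (A : Matrix (Fin D) (Fin D) ℂ) : ℝ :=
  (((Matrix.posSemidef_conjTranspose_mul_self A).1.eigenvectorUnitary.1 *
      diagonal (((↑) : ℝ → ℂ) ∘ (√·) ∘ (Matrix.posSemidef_conjTranspose_mul_self A).1.eigenvalues) *
      (star (Matrix.posSemidef_conjTranspose_mul_self A).1.eigenvectorUnitary :
        Matrix (Fin D) (Fin D) ℂ)).trace).re

open scoped MatrixOrder

lemma Finset.two_mul_sum_sum_filter_lt_le {ι : Type*} [Fintype ι] [LinearOrder ι]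
    {f : ι → ι → ℝ} (hsymm : ∀ i j, f i j = f j i) (hnonneg : ∀ i j, 0 ≤ f i j) :
    2 * ∑ i, ∑ j ∈ univ.filter (fun j => j < i), f i j ≤ ∑ i, ∑ j, f i j := by
  have hswap : ∑ i, ∑ j ∈ univ.filter (fun j => j < i), f i j =
      ∑ i, ∑ j ∈ univ.filter (fun j => i < j), f i j := by
    simp only [sum_filter]
    rw [sum_comm]
    exact sum_congr rfl fun i _ => sum_congr rfl fun j _ => by rw [hsymm]
  rw [two_mul]
  nth_rewrite 2 [hswap]
  rw [← sum_add_distrib]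
  refine sum_le_sum fun i _ => ?_
  rw [← sum_union (disjoint_filter.mpr fun j _ h h' => lt_asymm h h')]
  exact sum_le_univ_sum_of_nonneg fun j => hnonneg i j

namespace Matrix

variable {n : Type*} [Fintype n]

lemma norm_trace_conjTranspose_mul_sq_le {m : Type*} [Fintype m] (X Y : Matrix m n ℂ) :
    ‖(Xᴴ * Y).trace‖ ^ 2 ≤ (Xᴴ * X).trace.re * (Yᴴ * Y).trace.re := by
  have hinner (X Y : Matrix m n ℂ) : (Xᴴ * Y).trace =
      inner ℂ (WithLp.toLp 2 (vec X) : EuclideanSpace ℂ (n × m)) (WithLp.toLp 2 (vec Y)) := by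
    rw [← star_vec_dotProduct_vec, EuclideanSpace.inner_eq_star_dotProduct, dotProduct_comm]
  rw [hinner, hinner, hinner, sq]
  nth_rewrite 2 [← norm_inner_symm]
  exact inner_mul_inner_self_le _ _

lemma one_sub_re_trace_sum_smul_mul_self {ι : Type*} [Fintype ι] {α : ι → ℝ}
    (hα : ∑ i, α i = 1) (ρ : ι → Matrix n n ℂ) :
    1 - ((∑ i, (α i : ℂ) • ρ i) * (∑ i, (α i : ℂ) • ρ i)).trace.re =
      ∑ i, ∑ j, α i * α j * (1 - (ρ i * ρ j).trace.re) := by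
  have hexpand : ((∑ i, (α i : ℂ) • ρ i) * (∑ i, (α i : ℂ) • ρ i)).trace.re =
      ∑ i, ∑ j, α i * α j * (ρ i * ρ j).trace.re := by
    simp only [Finset.sum_mul, Finset.mul_sum, smul_mul_smul_comm, trace_sum, trace_smul,
      Complex.re_sum, smul_eq_mul, ← Complex.ofReal_mul, Complex.re_ofReal_mul]
    exact Finset.sum_comm
  simp only [hexpand, mul_sub, mul_one, Finset.sum_sub_distrib, ← Finset.sum_mul_sum, hα]

variable [DecidableEq n]

lemma IsHermitian.trace_cfc {A : Matrix n n ℂ} (hA : A.IsHermitian) (f : ℝ → ℝ) :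
    (cfc f A).trace = ∑ i, (f (hA.eigenvalues i) : ℂ) := by
  rw [hA.cfc_eq, IsHermitian.cfc, Unitary.conjStarAlgAut_apply, trace_mul_cycle,
    Unitary.coe_star_mul_self, one_mul, trace_diagonal]
  rfl

lemma IsHermitian.sq_re_trace_le_card_mul {A : Matrix n n ℂ} (hA : A.IsHermitian) :
    A.trace.re ^ 2 ≤ Fintype.card n * (A * A).trace.re := by
  have htrace := hA.trace_cfc id
  have hsq := hA.trace_cfc (· ^ 2)
  rw [cfc_id ℝ A] at htrace
  rw [cfc_pow_id A 2, sq] at hsq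
  rw [htrace, hsq, Complex.re_sum, Complex.re_sum]
  simp only [id, Complex.ofReal_re]
  exact sq_sum_le_card_mul_sum_sq

lemma IsHermitian.one_div_card_le_re_trace_mul_self {A : Matrix n n ℂ} (hA : A.IsHermitian)
    (h : A.trace = 1) : 1 / (Fintype.card n : ℝ) ≤ (A * A).trace.re := by
  have hbound := hA.sq_re_trace_le_card_mul
  rw [h, Complex.one_re, one_pow] at hbound
  have hcard : (0 : ℝ) < Fintype.card n := by
    by_contra! hcard
    rw [le_antisymm hcard (Nat.cast_nonneg _), zero_mul] at hbound
    linarith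
  rw [div_le_iff₀ hcard]
  linarith

lemma re_trace_mul_nonneg {B C : Matrix n n ℂ} (hB : 0 ≤ B) (hC : 0 ≤ C) :
    0 ≤ (B * C).trace.re := by
  set R := CFC.sqrt B
  have hR : Rᴴ = R := (CFC.sqrt_nonneg B).isSelfAdjoint
  have hRCR : (R * C * Rᴴ).PosSemidef :=
    (nonneg_iff_posSemidef.mp hC).mul_mul_conjTranspose_same R
  have htrace : (R * C * Rᴴ).trace = (B * C).trace := by
    rw [hR, trace_mul_cycle, ← CFC.sqrt_mul_sqrt_self B hB]
  exact (Complex.nonneg_iff.mp (htrace ▸ hRCR.trace_nonneg)).1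

lemma re_trace_mul_le_of_le_one {X Y : Matrix n n ℂ} (hX : 0 ≤ X) (hY : Y ≤ 1) :
    (X * Y).trace.re ≤ X.trace.re := by
  have := re_trace_mul_nonneg hX (sub_nonneg.mpr hY)
  rw [mul_sub, mul_one, trace_sub, Complex.sub_re] at this
  linarith

lemma re_trace_mul_le_one {ρ σ : Matrix n n ℂ} (hρ : 0 ≤ ρ) (hρ1 : ρ.trace = 1) (hσ1 : σ ≤ 1) :
    (ρ * σ).trace.re ≤ 1 := by
  simpa [hρ1] using re_trace_mul_le_of_le_one hρ hσ1

lemma le_one_of_trace_eq_one {A : Matrix n n ℂ} (hA : 0 ≤ A) (h : A.trace = 1) : A ≤ 1 := by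
  have hA' := nonneg_iff_posSemidef.mp hA
  rw [← map_one (algebraMap ℝ (Matrix n n ℂ)), le_algebraMap_iff_spectrum_le]
  intro x hx
  obtain ⟨i, rfl⟩ := hA'.1.spectrum_real_eq_range_eigenvalues ▸ hx
  have hsum : ∑ j, hA'.1.eigenvalues j = 1 := by
    simpa [Complex.re_sum] using congrArg Complex.re (hA'.1.trace_eq_sum_eigenvalues.symm.trans h)
  exact hsum ▸ Finset.single_le_sum (fun j _ => hA'.eigenvalues_nonneg j) (Finset.mem_univ i)

lemma norm_trace_mul_mul_sq_le {P B C : Matrix n n ℂ} (hP : P.IsHermitian) (hB : 0 ≤ B)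
    (hC : 0 ≤ C) : ‖(P * B * C).trace‖ ^ 2 ≤ (P * B * P * C).trace.re * (B * C).trace.re := by
  set R := CFC.sqrt B
  set S := CFC.sqrt C
  have hR : Rᴴ = R := (CFC.sqrt_nonneg B).isSelfAdjoint
  have hS : Sᴴ = S := (CFC.sqrt_nonneg C).isSelfAdjoint
  have hRR : R * R = B := CFC.sqrt_mul_sqrt_self B hB
  have hSS : S * S = C := CFC.sqrt_mul_sqrt_self C hC
  have hX : (R * P * S)ᴴ = S * P * R := by simp only [conjTranspose_mul, hR, hS, hP.eq, mul_assoc]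
  have hY : (R * S)ᴴ = S * R := by simp only [conjTranspose_mul, hR, hS]
  have hXY : ((R * P * S)ᴴ * (R * S)).trace = (P * B * C).trace := by
    rw [hX, ← hRR, ← hSS]; simp only [mul_assoc]; rw [trace_mul_comm S]; simp only [mul_assoc]
  have hXX : ((R * P * S)ᴴ * (R * P * S)).trace = (P * B * P * C).trace := by
    rw [hX, ← hRR, ← hSS]; simp only [mul_assoc]; rw [trace_mul_comm S]; simp only [mul_assoc]
  have hYY : ((R * S)ᴴ * (R * S)).trace = (B * C).trace := by
    rw [hY, ← hRR, ← hSS]; simp only [mul_assoc]; rw [trace_mul_comm S]; simp only [mul_assoc]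
  rw [← hXY, ← hXX, ← hYY]
  exact norm_trace_conjTranspose_mul_sq_le _ _

lemma re_trace_mul_mul_le_of_isStarProjection {P X : Matrix n n ℂ} (hP : IsStarProjection P)
    (hX : 0 ≤ X) : (P * X * P).trace.re ≤ X.trace.re := by
  rw [trace_mul_cycle, hP.isIdempotentElem.eq, trace_mul_comm]
  exact re_trace_mul_le_of_le_one hX hP.le_one

lemma norm_trace_mul_mul_one_sub_le {P ρ σ : Matrix n n ℂ} (hP : IsStarProjection P)
    (hρ : 0 ≤ ρ) (hρ1 : ρ.trace = 1) (hσ : 0 ≤ σ) (hσ1 : σ ≤ 1) :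
    ‖(P * ρ * (1 - σ)).trace‖ ≤ √(1 - (ρ * σ).trace.re) := by
  have hρσ : (ρ * (1 - σ)).trace.re = 1 - (ρ * σ).trace.re := by
    rw [mul_sub, mul_one, trace_sub, Complex.sub_re, hρ1, Complex.one_re]
  have hPρP : (P * ρ * P * (1 - σ)).trace.re ≤ 1 :=
    calc (P * ρ * P * (1 - σ)).trace.re ≤ (P * ρ * P).trace.re :=
          re_trace_mul_le_of_le_one (hP.isSelfAdjoint.conjugate_nonneg hρ) (sub_le_self 1 hσ)
      _ ≤ ρ.trace.re := re_trace_mul_mul_le_of_isStarProjection hP hρ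
      _ = 1 := by rw [hρ1, Complex.one_re]
  rw [← hρσ]
  exact Real.le_sqrt_of_sq_le <| (norm_trace_mul_mul_sq_le hP.isSelfAdjoint hρ
    (sub_nonneg.mpr hσ1)).trans (mul_le_of_le_one_left (re_trace_mul_nonneg hρ
    (sub_nonneg.mpr hσ1)) hPρP)

lemma norm_trace_mul_one_sub_mul_le {P ρ σ : Matrix n n ℂ} (hP : IsStarProjection P)
    (hρ : 0 ≤ ρ) (hρ1 : ρ ≤ 1) (hσ : 0 ≤ σ) (hσ1 : σ.trace = 1) :
    ‖(P * (1 - ρ) * σ).trace‖ ≤ √(1 - (ρ * σ).trace.re) := by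
  have hPH : Pᴴ = P := hP.isSelfAdjoint
  have hρH : ρᴴ = ρ := hρ.isSelfAdjoint
  have hσH : σᴴ = σ := hσ.isSelfAdjoint
  have hconj : (P * (1 - ρ) * σ).trace = star (P * σ * (1 - ρ)).trace := by
    rw [← trace_conjTranspose, conjTranspose_mul, conjTranspose_mul, conjTranspose_sub,
      conjTranspose_one, hPH, hρH, hσH, ← mul_assoc, trace_mul_cycle (1 - ρ)]
  rw [hconj, norm_star, trace_mul_comm ρ σ]
  exact norm_trace_mul_mul_one_sub_le hP hσ hσ1 hρ hρ1

lemma IsHermitian.exists_isStarProjection_cfc_abs {A : Matrix n n ℂ} (hA : A.IsHermitian) :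
    ∃ P : Matrix n n ℂ, IsStarProjection P ∧ cfc (fun x : ℝ => |x|) A = 2 • (P * A) - A := by
  have hcont (f : ℝ → ℝ) : ContinuousOn f (spectrum ℝ A) := finite_real_spectrum.continuousOn f
  set χ : ℝ → ℝ := fun x => if 0 < x then 1 else 0
  refine ⟨cfc χ A, ⟨?_, cfc_predicate χ A⟩, ?_⟩
  · rw [IsIdempotentElem, ← cfc_mul χ χ A (hcont χ) (hcont χ)]
    exact cfc_congr fun x _ => by by_cases h : 0 < x <;> simp [χ, h]
  · have habs : (fun x : ℝ => |x|) = fun x => 2 * (χ x * x) - x := by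
      funext x
      by_cases h : 0 < x
      · simp only [χ, if_pos h, abs_of_pos h]; ring
      · simp only [χ, if_neg h, abs_of_nonpos (not_lt.mp h)]; ring
    rw [habs, cfc_sub _ _ A (hcont _) (hcont _), cfc_const_mul _ _ A (hcont _),
      cfc_mul χ _ A (hcont _) (hcont _), cfc_id' ℝ A, two_smul, two_smul]

end Matrix

lemma traceNorm_eq_re_trace_cfc_abs {D : ℕ} {A : Matrix (Fin D) (Fin D) ℂ} (hA : A.IsHermitian) :
    traceNorm A = (cfc (fun x : ℝ => |x|) A).trace.re := by
  have hsqrt : traceNorm A = (cfc Real.sqrt (Aᴴ * A)).trace.re := by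
    rw [IsHermitian.cfc_eq (posSemidef_conjTranspose_mul_self A).1]; rfl
  rw [hsqrt, hA.eq, ← sq, ← cfc_comp_pow Real.sqrt 2 A]
  simp only [Real.sqrt_sq_eq_abs]

lemma traceNorm_sub_sq_le {D : ℕ} {ρ σ : Matrix (Fin D) (Fin D) ℂ} (hρ : 0 ≤ ρ) (hσ : 0 ≤ σ)
    (hρ1 : ρ.trace = 1) (hσ1 : σ.trace = 1) :
    traceNorm (ρ - σ) ^ 2 ≤ 16 * (1 - (ρ * σ).trace.re) := by
  have hH : (ρ - σ).IsHermitian := hρ.isSelfAdjoint.sub hσ.isSelfAdjoint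
  obtain ⟨P, hP, hcfc⟩ := hH.exists_isStarProjection_cfc_abs
  set t := (ρ * σ).trace.re
  have hnorm : traceNorm (ρ - σ) = 2 * (P * (ρ - σ)).trace.re := by
    rw [traceNorm_eq_re_trace_cfc_abs hH, hcfc, trace_sub, trace_smul, trace_sub, hρ1, hσ1]
    simp
  have hsplit : (P * (ρ - σ)).trace = (P * ρ * (1 - σ)).trace - (P * (1 - ρ) * σ).trace := by
    rw [← trace_sub]; congr 1; noncomm_ring
  have hσ_le : σ ≤ 1 := le_one_of_trace_eq_one hσ hσ1
  have h₁ : ‖(P * ρ * (1 - σ)).trace‖ ≤ √(1 - t) :=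
    norm_trace_mul_mul_one_sub_le hP hρ hρ1 hσ hσ_le
  have h₂ : ‖(P * (1 - ρ) * σ).trace‖ ≤ √(1 - t) :=
    norm_trace_mul_one_sub_mul_le hP hρ (le_one_of_trace_eq_one hρ hρ1) hσ hσ1
  have ht : 0 ≤ 1 - t := sub_nonneg.mpr (re_trace_mul_le_one hρ hρ1 hσ_le)
  have hhalf : |(P * (ρ - σ)).trace.re| ≤ 2 * √(1 - t) := by
    rw [hsplit, Complex.sub_re]
    calc _ ≤ |(P * ρ * (1 - σ)).trace.re| + |(P * (1 - ρ) * σ).trace.re| := abs_sub _ _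
      _ ≤ 2 * √(1 - t) := by
        linarith [Complex.abs_re_le_norm (P * ρ * (1 - σ)).trace,
          Complex.abs_re_le_norm (P * (1 - ρ) * σ).trace]
  have hsq := pow_le_pow_left₀ (abs_nonneg _) hhalf 2
  rw [mul_pow, Real.sq_sqrt ht, sq_abs] at hsq
  rw [hnorm, mul_pow]
  linarith

theorem stmt_3 {D N : ℕ} (ρ : Fin N → Matrix (Fin D) (Fin D) ℂ) (α : Fin N → ℝ)
    (hρ : ∀ i, (ρ i).PosSemidef) (htr : ∀ i, (ρ i).trace = 1)
    (hα : ∀ i, 0 < α i) (hsum : ∑ i, α i = 1) :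
    (∑ i, ∑ j ∈ Finset.univ.filter (fun j => j < i),
        α i * α j * traceNorm (ρ i - ρ j) ^ 2)
      ≤ 8 * (1 - (((∑ i, (α i : ℂ) • ρ i) * (∑ i, (α i : ℂ) • ρ i)).trace).re)
    ∧ 8 * (1 - (((∑ i, (α i : ℂ) • ρ i) * (∑ i, (α i : ℂ) • ρ i)).trace).re)
      ≤ 8 * (1 - 1 / (D : ℝ)) := by
  have hρ0 i : 0 ≤ ρ i := (hρ i).nonneg
  have hαα i j : 0 ≤ α i * α j := (mul_pos (hα i) (hα j)).le
  set F : Fin N → Fin N → ℝ := fun i j => α i * α j * (1 - (ρ i * ρ j).trace.re)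
  have hF0 i j : 0 ≤ F i j := mul_nonneg (hαα i j) <| sub_nonneg.mpr <|
    re_trace_mul_le_one (hρ0 i) (htr i) (le_one_of_trace_eq_one (hρ0 j) (htr j))
  have hFsymm i j : F i j = F j i := by simp only [F, trace_mul_comm (ρ i)]; ring
  have hbar : 0 ≤ ∑ i, (α i : ℂ) • ρ i :=
    Finset.sum_nonneg fun i _ => smul_nonneg (by exact_mod_cast (hα i).le) (hρ0 i)
  have hbar1 : (∑ i, (α i : ℂ) • ρ i).trace = 1 := by
    simp [trace_sum, htr, ← Complex.ofReal_sum, hsum]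
  constructor
  · calc _ ≤ ∑ i, ∑ j ∈ Finset.univ.filter (fun j => j < i), 16 * F i j :=
          Finset.sum_le_sum fun i _ => Finset.sum_le_sum fun j _ => by
            linarith [mul_le_mul_of_nonneg_left
              (traceNorm_sub_sq_le (hρ0 i) (hρ0 j) (htr i) (htr j)) (hαα i j)]
      _ ≤ 8 * ∑ i, ∑ j, F i j := by
        simp only [← Finset.mul_sum]
        linarith [Finset.two_mul_sum_sum_filter_lt_le hFsymm hF0]
      _ = _ := by rw [one_sub_re_trace_sum_smul_mul_self hsum]
  · have hpurity := IsHermitian.one_div_card_le_re_trace_mul_self hbar.isSelfAdjoint hbar1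
    rw [Fintype.card_fin] at hpurity
    linarith
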